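/- Let n ≥ 1, let μ be a probability measure on ℝ, and let p* : ℝ → [0,1] be a measurable function giving the probability that the initial choice is 0 given α. In the binary AR(1) logit model, define the n-periods forward average marginal effect AME^{(n)} = ∫ (Λ(α+β) − Λ(α))^n dμ(α). Let (0, (1,0)^n) denote the (2n+1)-period history beginning with 0 followed by n repetitions of (1,0), and ((1,0)^n, 1) the (2n+1)-period history consisting of n repetitions of (1,0) followed by 1. Then: AME^{(n)} = (e^β − 1)^n · ( P_{0,(1,0)^n} + P_{(1,0)^n,1} ), where P_{0,(1,0)^n} = ∫ p*(α) · (π_{01}(α) π_{10}(α))^n dμ(α) and P_{(1,0)^n,1} = ∫ (1 − p*(α)) · (π_{10}(α) π_{01}(α))^n dμ(α). (Proposition 2.) -/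

import Mathlib

open MeasureTheory

/-- The logistic function `Λ(u) = e^u / (1 + e^u)`. -/
noncomputable def logistic (u : ℝ) : ℝ := Real.exp u / (1 + Real.exp u)

/-!
Since `Λ(α+β) − Λ(α) = (e^β − 1) Λ(α) (1 − Λ(α+β))` pointwise, the `n`-th power of the causal
effect is `(e^β − 1)^n` times the probability `(π₀₁ π₁₀)^n` of the alternating run. Splitting the
integral of that probability with the weights `p*` and `1 − p*` gives the two history
probabilities.
-/

lemma logistic_eq_sigmoid (u : ℝ) : logistic u = Real.sigmoid u := by
  rw [logistic, Real.sigmoid_def, Real.exp_neg]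
  field_simp
  ring

@[fun_prop]
lemma continuous_logistic : Continuous logistic := by
  simpa only [funext logistic_eq_sigmoid] using continuous_sigmoid

lemma logistic_add_sub_logistic (α β : ℝ) :
    logistic (α + β) - logistic α
      = (Real.exp β - 1) * (logistic α * (1 - logistic (α + β))) := by
  unfold logistic
  rw [Real.exp_add]
  field_simp
  ring

lemma logistic_mul_one_sub_logistic_mem_Icc (a b : ℝ) :
    logistic a * (1 - logistic b) ∈ Set.Icc (0 : ℝ) 1 := by
  simp only [logistic_eq_sigmoid]
  have ha₀ := Real.sigmoid_nonneg a
  have ha₁ := Real.sigmoid_le_one a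
  have hb₀ := Real.sigmoid_nonneg b
  have hb₁ := Real.sigmoid_le_one b
  constructor <;> nlinarith

lemma integrable_logistic_mul_one_sub_logistic_pow {μ : Measure ℝ} [IsFiniteMeasure μ]
    (β : ℝ) (n : ℕ) :
    Integrable (fun α => (logistic α * (1 - logistic (α + β))) ^ n) μ := by
  refine Integrable.of_mem_Icc 0 1 (by fun_prop) ?_
  refine .of_forall fun α => ?_
  obtain ⟨h₀, h₁⟩ := logistic_mul_one_sub_logistic_mem_Icc α (α + β)
  exact ⟨pow_nonneg h₀ n, pow_le_one₀ h₀ h₁⟩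

lemma integral_mul_add_integral_one_sub_mul {X : Type*} [MeasurableSpace X] {μ : Measure X}
    {p g : X → ℝ} (hp : Measurable p) (hp₀ : ∀ x, 0 ≤ p x) (hp₁ : ∀ x, p x ≤ 1)
    (hg : Integrable g μ) :
    ∫ x, p x * g x ∂μ + ∫ x, (1 - p x) * g x ∂μ = ∫ x, g x ∂μ := by
  have hbound : ∀ᵐ x ∂μ, ‖p x‖ ≤ 1 :=
    .of_forall fun x => by rw [Real.norm_eq_abs, abs_le]; exact ⟨by linarith [hp₀ x], hp₁ x⟩
  have hpg : Integrable (fun x => p x * g x) μ := hg.bdd_mul hp.aestronglyMeasurable hbound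
  have hqg : Integrable (fun x => (1 - p x) * g x) μ :=
    (hg.sub hpg).congr (.of_forall fun x => by simp only [Pi.sub_apply]; ring)
  rw [← integral_add hpg hqg]
  congr 1 with x
  ring

theorem prop2_AME_n_general (β : ℝ) (n : ℕ)
    (μ : Measure ℝ) [IsProbabilityMeasure μ]
    (pstar : ℝ → ℝ) (hmeas : Measurable pstar)
    (h0 : ∀ α, 0 ≤ pstar α) (h1 : ∀ α, pstar α ≤ 1) :
    (∫ α, (logistic (α + β) - logistic α) ^ n ∂μ)
      = (Real.exp β - 1) ^ n
        * ((∫ α, pstar α * (logistic α * (1 - logistic (α + β))) ^ n ∂μ)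
            + ∫ α, (1 - pstar α) * ((1 - logistic (α + β)) * logistic α) ^ n ∂μ) := by
  simp only [mul_comm (1 - logistic (_ + β)) (logistic _)]
  rw [integral_mul_add_integral_one_sub_mul hmeas h0 h1
      (integrable_logistic_mul_one_sub_logistic_pow β n), ← integral_const_mul]
  simp only [logistic_add_sub_logistic, mul_pow]

/-- Proposition 2: in the binary AR(1) logit model, for `n ≥ 1` the
`n`-periods forward average marginal effect
`AME⁽ⁿ⁾ = ∫ (Λ(α+β) − Λ(α))^n dμ(α)` satisfies
`AME⁽ⁿ⁾ = (e^β − 1)^n · (P_{0,(1,0)^n} + P_{(1,0)^n,1})`, where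
`P_{0,(1,0)^n} = ∫ p*(α) · (π01(α) π10(α))^n dμ(α)` and
`P_{(1,0)^n,1} = ∫ (1 − p*(α)) · (π10(α) π01(α))^n dμ(α)`,
with `π01(α) = Λ(α)` and `π10(α) = 1 − Λ(α+β)`. -/
theorem prop2_AME_n (β : ℝ) (n : ℕ) (hn : 1 ≤ n)
    (μ : Measure ℝ) [IsProbabilityMeasure μ]
    (pstar : ℝ → ℝ) (hmeas : Measurable pstar)
    (h0 : ∀ α, 0 ≤ pstar α) (h1 : ∀ α, pstar α ≤ 1) :
    (∫ α, (logistic (α + β) - logistic α) ^ n ∂μ)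
      = (Real.exp β - 1) ^ n
        * ((∫ α, pstar α * (logistic α * (1 - logistic (α + β))) ^ n ∂μ)
            + ∫ α, (1 - pstar α) * ((1 - logistic (α + β)) * logistic α) ^ n ∂μ) :=
  prop2_AME_n_general β n μ pstar hmeas h0 h1
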